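/- Let S be a bounded self-adjoint operator on a complex Hilbert space H and let T be an unbounded self-adjoint operator on H such that ST ⊂ TS, i.e. for every x ∈ D(T), Sx ∈ D(T) and S(Tx) = T(Sx). Then for every real-valued continuous function f defined on the spectrum σ(S), one has f(S)T ⊂ T f(S), i.e. for every x ∈ D(T), f(S)x ∈ D(T) and f(S)(Tx) = T(f(S)x), where f(S) is given by the continuous functional calculus of S. -/

import Mathlib

/-! The bounded operators `A` with `A T ⊂ T A` form a subalgebra, and this subalgebra is
norm-closed because `T` is closed: if `Aₙ → A`, the graph points `(Aₙ x, Aₙ (T x))` converge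
to `(A x, A (T x))`. For self-adjoint `S`, the real functional calculus takes values in the
closed subalgebra generated by `S`, hence in every closed subalgebra containing `S`. -/

open LinearPMap

namespace LinearPMap

variable {𝕜 E : Type*} [NontriviallyNormedField 𝕜] [NormedAddCommGroup E] [NormedSpace 𝕜 E]

def commutant (T : E →ₗ.[𝕜] E) : Subalgebra 𝕜 (E →L[𝕜] E) where
  carrier := {A | ∀ x : T.domain, ∃ hx : A x ∈ T.domain, A (T x) = T ⟨A x, hx⟩}
  mul_mem' {A B} hA hB x := by
    obtain ⟨hBx, hTB⟩ := hB x
    obtain ⟨hABx, hTAB⟩ := hA ⟨B x, hBx⟩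
    exact ⟨hABx, by simp only [mul_apply_eq_comp, hTB, hTAB]⟩
  add_mem' {A B} hA hB x := by
    obtain ⟨hAx, hTA⟩ := hA x
    obtain ⟨hBx, hTB⟩ := hB x
    exact ⟨T.domain.add_mem hAx hBx, by
      rw [_root_.add_apply, hTA, hTB, ← T.map_add]; rfl⟩
  algebraMap_mem' c x :=
    ⟨T.domain.smul_mem c x.2, by
      simp only [Algebra.algebraMap_eq_smul_one, _root_.smul_apply, one_apply_eq_self]
      rw [← T.map_smul]; rfl⟩

variable {T : E →ₗ.[𝕜] E}

theorem mem_commutant_iff_mem_graph {A : E →L[𝕜] E} :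
    A ∈ T.commutant ↔ ∀ x : T.domain, ((A x : E), A (T x)) ∈ T.graph := by
  refine forall_congr' fun x => ⟨fun ⟨hx, h⟩ => (image_iff hx).mp h, fun h => ?_⟩
  exact ⟨mem_domain_of_mem_graph h, (image_iff _).mpr h⟩

theorem isClosed_commutant (hT : T.IsClosed) :
    _root_.IsClosed (T.commutant : Set (E →L[𝕜] E)) := by
  have h_eq : (T.commutant : Set (E →L[𝕜] E)) =
      ⋂ x : T.domain, (fun A : E →L[𝕜] E => ((A x : E), A (T x))) ⁻¹' T.graph := by
    ext A
    simp only [SetLike.mem_coe, mem_commutant_iff_mem_graph, Set.mem_iInter, Set.mem_preimage]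
  rw [h_eq]
  exact isClosed_iInter fun x => hT.preimage (by fun_prop)

end LinearPMap

theorem IsSelfAdjoint.elemental_toSubalgebra {R A : Type*} [CommSemiring R]
    [StarRing R] [TopologicalSpace A] [Semiring A] [StarRing A] [IsSemitopologicalSemiring A]
    [ContinuousStar A] [Algebra R A] [StarModule R A] {a : A} (ha : IsSelfAdjoint a) :
    (StarAlgebra.elemental R a).toSubalgebra = Algebra.elemental R a := by
  rw [StarAlgebra.elemental, StarSubalgebra.topologicalClosure_toSubalgebra_comm,
    StarAlgebra.adjoin_toSubalgebra, Set.star_singleton, ha.star_eq, Set.union_self]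
  rfl

theorem IsSelfAdjoint.cfc_mem_of_isClosed {A : Type*} [Ring A] [StarRing A] [Algebra ℝ A]
    [TopologicalSpace A] [IsTopologicalRing A] [ContinuousStar A] [StarModule ℝ A]
    [ContinuousFunctionalCalculus ℝ A IsSelfAdjoint] {a : A} (ha : IsSelfAdjoint a)
    {s : Subalgebra ℝ A} (hs : IsClosed (s : Set A)) (has : a ∈ s) (f : ℝ → ℝ) :
    cfc f a ∈ s := by
  refine Algebra.elemental.le_of_mem hs has ?_
  rw [← ha.elemental_toSubalgebra]
  exact cfc_mem_elemental f a

variable {H : Type*} [NormedAddCommGroup H] [InnerProductSpace ℂ H] [CompleteSpace H]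

theorem cfc_commutes_general (S : H →L[ℂ] H) (hS : IsSelfAdjoint S)
    (T : H →ₗ.[ℂ] H) (hT : IsSelfAdjoint T)
    (hST : ∀ x : T.domain, ∃ hx : S (x : H) ∈ T.domain, S (T x) = T ⟨S (x : H), hx⟩)
    (f : ℝ → ℝ) :
    ∀ x : T.domain, ∃ hx : cfc f S (x : H) ∈ T.domain,
      cfc f S (T x) = T ⟨cfc f S (x : H), hx⟩ :=
  hS.cfc_mem_of_isClosed (s := T.commutant.restrictScalars ℝ) (T.isClosed_commutant hT.isClosed)
    hST f

/-- If `S` is a bounded self-adjoint operator and `T` an unbounded self-adjoint operator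
with `ST ⊂ TS`, then `f(S)T ⊂ Tf(S)` for every real-valued continuous function `f` on the
spectrum of `S`, where `f(S)` is given by the continuous functional calculus. -/
theorem cfc_commutes (S : H →L[ℂ] H) (hS : IsSelfAdjoint S)
    (T : H →ₗ.[ℂ] H) (hT : IsSelfAdjoint T)
    (hST : ∀ x : T.domain, ∃ hx : S (x : H) ∈ T.domain, S (T x) = T ⟨S (x : H), hx⟩)
    (f : ℝ → ℝ) (hf : ContinuousOn f (spectrum ℝ S)) :
    ∀ x : T.domain, ∃ hx : cfc f S (x : H) ∈ T.domain,
      cfc f S (T x) = T ⟨cfc f S (x : H), hx⟩ :=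
  cfc_commutes_general S hS T hT hST f
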